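/- Suppose the kernel of P contains a non-constant function, and suppose moreover that either k_Q := ∫_M Q dμ ≠ 0 or the real vector space ker P has dimension at least 3. Then there exists a NON-CONSTANT u ∈ ker P such that for no pair (ω ∈ C(M,ℝ), α ∈ ℝ with α ≠ 0) does one have Q_ω = α·u. (Second statement of Theorem 1.1.) -/

import Mathlib

open MeasureTheory

variable {M : Type*} [TopologicalSpace M] [MeasurableSpace M]

/-- The transformed Q-curvature `Q_ω = e^{-nω}(Q + Pω)`. -/
noncomputable def Qcurv (n : ℝ) (P : C(M, ℝ) →ₗ[ℝ] C(M, ℝ)) (Q ω : C(M, ℝ)) : C(M, ℝ) :=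
  ⟨fun x => Real.exp (-n * ω x) * (Q x + P ω x),
    (Real.continuous_exp.comp (continuous_const.mul ω.continuous)).mul
      (Q.continuous.add (P ω).continuous)⟩

/-- The conformally rescaled measure `μ_ω`, with density `e^{nω}` w.r.t. `μ`. -/
noncomputable def confMeasure (μ : Measure M) (n : ℝ) (ω : C(M, ℝ)) : Measure M :=
  μ.withDensity fun x => ENNReal.ofReal (Real.exp (n * ω x))

/-- `𝒩(𝒬) = {u ∈ ker P : ∫ u·Q dμ = 0}`. -/
def NQ (μ : Measure M) (P : C(M, ℝ) →ₗ[ℝ] C(M, ℝ)) (Q : C(M, ℝ)) : Set C(M, ℝ) :=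
  {u | P u = 0 ∧ ∫ x, u x * Q x ∂μ = 0}

/-- `ℱ = ⋂_ω ℱ^ω`, where `ℱ^ω` is the set of `f` not `L²(μ_ω)`-orthogonal to `𝒩(𝒬)`. -/
def Fcal (μ : Measure M) (n : ℝ) (P : C(M, ℝ) →ₗ[ℝ] C(M, ℝ)) (Q : C(M, ℝ)) : Set C(M, ℝ) :=
  {f | ∀ ω : C(M, ℝ), ∃ u ∈ NQ μ P Q, ∫ x, f x * u x ∂(confMeasure μ n ω) ≠ 0}

variable [BorelSpace M] [CompactSpace M] [ConnectedSpace M]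
variable (μ : Measure M) [IsFiniteMeasure μ] [Measure.IsOpenPosMeasure μ]
variable (n : ℝ) (P : C(M, ℝ) →ₗ[ℝ] C(M, ℝ)) (Q : C(M, ℝ))

/-!
A function `u ∈ ker P` pairs with every `Q_ω` in `L²(μ_ω)` exactly as it pairs with `Q` in
`L²(μ)`: `∫ u Q_ω dμ_ω = ∫ u Q dμ + ∫ u Pω dμ` and the last integral vanishes by
self-adjointness. So if `∫ u Q dμ = 0`, then `Q_ω = α u` forces `α ∫ u² dμ_ω = 0`, impossible for
`u ≠ 0` and `α ≠ 0`. It remains to find a non-constant such `u`: if `∫ Q dμ ≠ 0`, correct a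
non-constant `v ∈ ker P` by a constant; if `dim ker P ≥ 3`, the hyperplane `{∫ u Q dμ = 0}` of
`ker P` has dimension `≥ 2` and so is not contained in the constants.
-/

section LinearAlgebra

universe u v
variable {K : Type u} {V : Type v} [Field K] [AddCommGroup V] [Module K V]

theorem Submodule.exists_mem_ker_notMem_span_singleton {W : Submodule K V} {f : V →ₗ[K] K}
    {e v : V} (he : e ∈ W) (hfe : f e ≠ 0) (hv : v ∈ W) (hve : v ∉ K ∙ e) :
    ∃ u ∈ W, f u = 0 ∧ u ∉ K ∙ e := by
  refine ⟨v - (f v / f e) • e, W.sub_mem hv (W.smul_mem _ he), by simp [hfe], fun h => hve ?_⟩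
  simpa using (K ∙ e).add_mem h
    ((K ∙ e).smul_mem (f v / f e) (Submodule.mem_span_singleton_self e))

theorem Submodule.exists_mem_ker_notMem_of_rank_le_one {W S : Submodule K V} (f : V →ₗ[K] K)
    (hS : Module.rank K S ≤ 1) (hW : 3 ≤ Module.rank K W) :
    ∃ u ∈ W, f u = 0 ∧ u ∉ S := by
  by_contra! h
  set g := f.domRestrict W
  have hker : Module.rank K (LinearMap.ker g) ≤ 1 := by
    refine le_trans (LinearMap.rank_le_of_injective
      ((W.subtype ∘ₗ (LinearMap.ker g).subtype).codRestrict S fun w => h _ w.1.2 w.2) ?_) hS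
    intro a b hab
    exact Subtype.ext (Subtype.ext (congrArg Subtype.val hab :))
  have hrange : Module.rank K (LinearMap.range g) ≤ 1 :=
    (Submodule.rank_le _).trans (Module.rank_self K).le
  have hW2 : Cardinal.lift.{u} (Module.rank K W) ≤ 1 + 1 := by
    rw [← g.lift_rank_range_add_rank_ker]
    gcongr <;> simpa
  have := (Cardinal.lift_le.{u}.2 hW).trans hW2
  norm_num at this

end LinearAlgebra

theorem ContinuousMap.mem_span_one_iff {X R : Type*} [TopologicalSpace X] [CommSemiring R]
    [TopologicalSpace R] [IsTopologicalSemiring R] {u : C(X, R)} :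
    u ∈ R ∙ (1 : C(X, R)) ↔ ∃ c, ContinuousMap.const X c = u := by
  simp only [Submodule.mem_span_singleton]
  refine exists_congr fun c => ?_
  rw [show c • (1 : C(X, R)) = ContinuousMap.const X c by ext; simp]

section Analysis

variable {X : Type*} [TopologicalSpace X] [MeasurableSpace X] [OpensMeasurableSpace X]

theorem ContinuousMap.integrable_of_compactSpace [CompactSpace X] (μ : Measure X)
    [IsFiniteMeasureOnCompacts μ] (f : C(X, ℝ)) : Integrable f μ :=
  f.continuous.integrable_of_hasCompactSupport (.of_compactSpace f)

theorem integral_confMeasure (μ : Measure X) (n : ℝ) (ω : C(X, ℝ)) (g : X → ℝ) :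
    ∫ x, g x ∂confMeasure μ n ω = ∫ x, Real.exp (n * ω x) * g x ∂μ := by
  rw [confMeasure, integral_withDensity_eq_integral_toReal_smul (by fun_prop)
    (.of_forall fun _ => ENNReal.ofReal_lt_top)]
  simp [(Real.exp_pos _).le]

variable [CompactSpace X] (μ : Measure X) [IsFiniteMeasureOnCompacts μ]

noncomputable def integralMul (Q : C(X, ℝ)) : C(X, ℝ) →ₗ[ℝ] ℝ where
  toFun u := ∫ x, u x * Q x ∂μ
  map_add' u v := by
    simp only [ContinuousMap.add_apply, add_mul]
    exact integral_add ((u * Q).integrable_of_compactSpace μ)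
      ((v * Q).integrable_of_compactSpace μ)
  map_smul' c u := by
    simp only [ContinuousMap.smul_apply, smul_eq_mul, mul_assoc, integral_const_mul,
      RingHom.id_apply]

theorem integralMul_apply (Q u : C(X, ℝ)) : integralMul μ Q u = ∫ x, u x * Q x ∂μ := rfl

theorem integral_mul_Qcurv_confMeasure (n : ℝ) {P : C(X, ℝ) →ₗ[ℝ] C(X, ℝ)} (Q : C(X, ℝ))
    (hPsa : ∀ u v : C(X, ℝ), ∫ x, u x * P v x ∂μ = ∫ x, P u x * v x ∂μ)
    {u : C(X, ℝ)} (hu : P u = 0) (ω : C(X, ℝ)) :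
    ∫ x, u x * Qcurv n P Q ω x ∂confMeasure μ n ω = ∫ x, u x * Q x ∂μ := by
  have hexp : ∀ x, Real.exp (n * ω x) * (u x * Qcurv n P Q ω x) = u x * Q x + u x * P ω x := by
    intro x
    simp only [Qcurv, ContinuousMap.coe_mk, neg_mul, Real.exp_neg]
    field_simp
  have hPu : ∫ x, u x * P ω x ∂μ = 0 := by simp [hPsa u ω, hu]
  rw [integral_confMeasure, funext hexp,
    integral_add (f := fun x => u x * Q x) (g := fun x => u x * P ω x)
      ((u * Q).integrable_of_compactSpace μ) ((u * P ω).integrable_of_compactSpace μ),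
    hPu, add_zero]

theorem integral_mul_self_confMeasure_pos [μ.IsOpenPosMeasure] (n : ℝ) (ω : C(X, ℝ))
    {u : C(X, ℝ)} (hu : u ≠ 0) : 0 < ∫ x, u x * u x ∂confMeasure μ n ω := by
  obtain ⟨x, hx⟩ := DFunLike.ne_iff.1 hu
  rw [integral_confMeasure]
  have hcont : Continuous fun y => Real.exp (n * ω y) * (u y * u y) := by fun_prop
  exact hcont.integral_pos_of_hasCompactSupport_nonneg_nonzero (.of_compactSpace _)
    (fun y => mul_nonneg (Real.exp_pos _).le (mul_self_nonneg _)) (x := x)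
    (mul_ne_zero (Real.exp_pos _).ne' (mul_self_ne_zero.2 hx))

theorem Qcurv_ne_smul_of_integral_mul_eq_zero [μ.IsOpenPosMeasure] {n : ℝ}
    {P : C(X, ℝ) →ₗ[ℝ] C(X, ℝ)} {Q : C(X, ℝ)}
    (hPsa : ∀ u v : C(X, ℝ), ∫ x, u x * P v x ∂μ = ∫ x, P u x * v x ∂μ)
    {u : C(X, ℝ)} (hu : P u = 0) (huQ : ∫ x, u x * Q x ∂μ = 0) (hu0 : u ≠ 0) (ω : C(X, ℝ))
    {α : ℝ} (hα : α ≠ 0) : Qcurv n P Q ω ≠ α • u := by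
  intro h
  have hpair := integral_mul_Qcurv_confMeasure μ n Q hPsa hu ω
  rw [h, huQ] at hpair
  simp only [ContinuousMap.smul_apply, smul_eq_mul, mul_left_comm _ α, integral_const_mul]
    at hpair
  exact mul_ne_zero hα (integral_mul_self_confMeasure_pos μ n ω hu0).ne' hpair

end Analysis

theorem stmt4
    (hn : 0 < n)
    (hPc : ∀ c : ℝ, P (ContinuousMap.const M c) = 0)
    (hPsa : ∀ u v : C(M, ℝ), ∫ x, u x * P v x ∂μ = ∫ x, P u x * v x ∂μ)
    (hker : ∃ v : C(M, ℝ), P v = 0 ∧ ∀ c : ℝ, v ≠ ContinuousMap.const M c)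
    (hcond : (∫ x, Q x ∂μ) ≠ 0 ∨ 3 ≤ Module.rank ℝ (LinearMap.ker P)) :
    ∃ u : C(M, ℝ), P u = 0 ∧ (∀ c : ℝ, u ≠ ContinuousMap.const M c) ∧
      ∀ (ω : C(M, ℝ)) (α : ℝ), α ≠ 0 → Qcurv n P Q ω ≠ α • u := by
  have hconst {u : C(M, ℝ)} : u ∉ ℝ ∙ 1 ↔ ∀ c : ℝ, u ≠ ContinuousMap.const M c := by
    simp [ContinuousMap.mem_span_one_iff, eq_comm]
  obtain ⟨u, hu, huQ, hu1⟩ :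
      ∃ u ∈ LinearMap.ker P, integralMul μ Q u = 0 ∧ u ∉ ℝ ∙ (1 : C(M, ℝ)) := by
    rcases hcond with hQ | hrank
    · obtain ⟨v, hv, hvc⟩ := hker
      exact Submodule.exists_mem_ker_notMem_span_singleton (hPc 1)
        (by simpa [integralMul_apply] using hQ) hv (hconst.2 hvc)
    · exact Submodule.exists_mem_ker_notMem_of_rank_le_one _
        ((rank_span_le _).trans (by simp)) hrank
  refine ⟨u, hu, hconst.1 hu1, fun ω α hα => ?_⟩
  exact Qcurv_ne_smul_of_integral_mul_eq_zero μ hPsa hu huQ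
    (fun h => hu1 (h ▸ Submodule.zero_mem _)) ω hα
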